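/- Let h(z) ∈ ℂ((z)) with h'(z) invertible, c ∈ ℂ, b(z) ∈ ℂ((z)), and define σ(L_i) := -(h(z)^{i+1}/h'(z))∂_z - (i+1)c·h(z)^i + (h(z)^{i+1}/h'(z))·b(z) as first-order differential operators on ℂ((z)) for i ≥ -1. Then [σ(L_i), σ(L_j)] = (i-j)σ(L_{i+j}) for all i,j ≥ -1, i.e., σ defines a Lie algebra homomorphism from W_> to Diff¹(ℂ((z))). -/

import Mathlib

/-- The derivative `∂_z` on formal Laurent series `ℂ((z))`, acting on coefficients by
`(∂_z f).coeff n = (n+1) · f.coeff (n+1)`. -/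
noncomputable def Dz : LaurentSeries ℂ →ₗ[ℂ] LaurentSeries ℂ where
  toFun f :=
    { coeff := fun n => ((n + 1 : ℤ) : ℂ) * f.coeff (n + 1)
      isPWO_support' := by
        refine (f.isPWO_support'.image_of_monotone
          (f := fun m => m - 1) (fun a b hab => by dsimp; omega)).mono ?_
        intro n hn
        simp only [Function.mem_support] at hn
        refine ⟨n + 1, fun h => hn (by rw [h, mul_zero]), by dsimp; ring⟩ }
  map_add' f g := by ext n; simp [mul_add]
  map_smul' c f := by ext n; simp; ring

/-- Multiplication by a fixed Laurent series `g` as a `ℂ`-linear operator on `ℂ((z))`. -/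
noncomputable def mulOp (g : LaurentSeries ℂ) : LaurentSeries ℂ →ₗ[ℂ] LaurentSeries ℂ where
  toFun f := g * f
  map_add' f1 f2 := mul_add g f1 f2
  map_smul' c f := by
    have h : ∀ x : LaurentSeries ℂ, c • x = (HahnSeries.single (0 : ℤ) c) * x :=
      fun x => (HahnSeries.single_zero_mul_eq_smul).symm
    simp only [RingHom.id_apply, h]
    ring

/-- The first-order differential operator
`σ(L_i) = -(h^{i+1}/h') ∂_z - (i+1) c h^i + (h^{i+1}/h') b` on `ℂ((z))`
(powers of `h` are `zpow`'s, which is legitimate since `ℂ((z))` is a field). -/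
noncomputable def sigmaHCB (h : LaurentSeries ℂ) (c : ℂ) (b : LaurentSeries ℂ)
    (i : ℤ) : LaurentSeries ℂ →ₗ[ℂ] LaurentSeries ℂ :=
  (-(1 : ℂ)) • (mulOp (h ^ (i + 1) / Dz h) ∘ₗ Dz)
    - (((i + 1 : ℤ) : ℂ) * c) • mulOp (h ^ i)
    + mulOp ((h ^ (i + 1) / Dz h) * b)

/-!
The operators `σ(L_i)` are the standard representation `-z^{i+1} ∂ - (i+1) c z^i` transported
along `z ↦ h`, with `f_i = h^{i+1}/h'` in place of `z^{i+1}` and twisted by `b`. Everything rests on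
`f_i ∂(h^k) = k h^{i+k}`: it gives `f_i f_j' - f_j f_i' = (j - i) f_{i+j}` (the `h''` terms cancel)
for the vector-field parts, and the multiplication parts then match by the same identity. This only
uses that `∂` is a derivation of a field. For `∂_z` on `ℂ((z))`, the Leibniz rule comes from the
Euler operator `z ∂_z`, a derivation because on the antidiagonal `a + b = n` its weight `n` splits
as `a + b`.
-/

namespace Derivation

section FirstOrder

variable {R A : Type*} [CommSemiring R] [CommRing A] [Algebra R A] (D : Derivation R A A)

def firstOrderOp (f g : A) : A →ₗ[R] A :=
  LinearMap.mulLeft R f ∘ₗ (D : A →ₗ[R] A) + LinearMap.mulLeft R g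

lemma firstOrderOp_apply (f g x : A) : D.firstOrderOp f g x = f * D x + g * x := rfl

lemma commutator_firstOrderOp (f g F G : A) :
    D.firstOrderOp f g ∘ₗ D.firstOrderOp F G - D.firstOrderOp F G ∘ₗ D.firstOrderOp f g
      = D.firstOrderOp (f * D F - F * D f) (f * D G - F * D g) := by
  ext x
  simp only [LinearMap.sub_apply, LinearMap.comp_apply, firstOrderOp_apply, map_add, leibniz,
    smul_eq_mul]
  ring

lemma zsmul_firstOrderOp (n : ℤ) (f g : A) :
    n • D.firstOrderOp f g = D.firstOrderOp (n * f) (n * g) := by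
  ext x
  change n • D.firstOrderOp f g x = _
  simp only [firstOrderOp_apply, zsmul_eq_mul]
  ring

end FirstOrder

section Field

variable {R K : Type*} [CommRing R] [Field K] [Algebra R K] (D : Derivation R K K) {h : K}

lemma zpow_div_mul_apply_zpow (hd : D h ≠ 0) (i k : ℤ) :
    h ^ (i + 1) / D h * D (h ^ k) = k * h ^ (i + k) := by
  have hh : h ≠ 0 := by rintro rfl; exact hd (map_zero D)
  rw [leibniz_zpow, zsmul_eq_mul, smul_eq_mul, show i + k = (i + 1) + (k - 1) by ring,
    zpow_add₀ hh (i + 1) (k - 1)]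
  field_simp

lemma wronskian_zpow_div (hd : D h ≠ 0) (i j : ℤ) :
    h ^ (i + 1) / D h * D (h ^ (j + 1) / D h) - h ^ (j + 1) / D h * D (h ^ (i + 1) / D h)
      = (j - i) * (h ^ (i + j + 1) / D h) := by
  have hi := D.zpow_div_mul_apply_zpow hd i (j + 1)
  have hj := D.zpow_div_mul_apply_zpow hd j (i + 1)
  rw [show i + (j + 1) = i + j + 1 by ring] at hi
  rw [show j + (i + 1) = i + j + 1 by ring] at hj
  simp only [div_eq_mul_inv, leibniz, smul_eq_mul] at hi hj ⊢
  push_cast at hi hj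
  linear_combination (D h)⁻¹ * (hi - hj)

-- `σ(L_i)` with an arbitrary derivation `D` in place of `∂_z`.
def wittRepr (h : K) (c : R) (b : K) (i : ℤ) : K →ₗ[R] K :=
  D.firstOrderOp (-(h ^ (i + 1) / D h))
    (h ^ (i + 1) / D h * b - (i + 1) * algebraMap R K c * h ^ i)

theorem wittRepr_commutator (hd : D h ≠ 0) (c : R) (b : K) (i j : ℤ) :
    D.wittRepr h c b i ∘ₗ D.wittRepr h c b j - D.wittRepr h c b j ∘ₗ D.wittRepr h c b i
      = (i - j) • D.wittRepr h c b (i + j) := by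
  have hW := D.wronskian_zpow_div hd i j
  have hij := D.zpow_div_mul_apply_zpow hd i j
  have hji := D.zpow_div_mul_apply_zpow hd j i
  rw [add_comm j i] at hji
  simp only [wittRepr, commutator_firstOrderOp, zsmul_firstOrderOp]
  congr 1
  · rw [map_neg, map_neg]
    push_cast
    linear_combination hW
  · simp only [map_sub, leibniz, smul_eq_mul, map_add, map_intCast, map_one_eq_zero,
      map_algebraMap]
    push_cast
    linear_combination (-b) * hW
      + ((j : K) + 1) * algebraMap R K c * hij - ((i : K) + 1) * algebraMap R K c * hji

end Field

end Derivation

namespace LaurentSeries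

-- `ℂ((z))` carries two ℂ-algebra structures that are not defeq: the one through `ℂ⟦z⟧`, found
-- first by default, and the coefficientwise one, for which `Dz` and `mulOp` are ℂ-linear.
attribute [local instance 1100] HahnSeries.instAlgebra

noncomputable def eulerOp (f : LaurentSeries ℂ) : LaurentSeries ℂ where
  coeff n := (n : ℂ) * f.coeff n
  isPWO_support' := f.isPWO_support'.mono fun _ hn => right_ne_zero_of_mul hn

lemma eulerOp_coeff (f : LaurentSeries ℂ) (n : ℤ) : (eulerOp f).coeff n = n * f.coeff n := rfl

lemma support_eulerOp_subset (f : LaurentSeries ℂ) : (eulerOp f).support ⊆ f.support :=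
  fun _ hn => right_ne_zero_of_mul hn

lemma eulerOp_mul (f g : LaurentSeries ℂ) :
    eulerOp (f * g) = eulerOp f * g + f * eulerOp g := by
  ext n
  rw [HahnSeries.coeff_add,
    HahnSeries.coeff_mul_left' f.isPWO_support (support_eulerOp_subset f),
    HahnSeries.coeff_mul_right' g.isPWO_support (support_eulerOp_subset g),
    eulerOp_coeff, HahnSeries.coeff_mul, Finset.mul_sum, ← Finset.sum_add_distrib]
  refine Finset.sum_congr rfl fun ab hab => ?_
  rw [eulerOp_coeff, eulerOp_coeff, ← (Finset.mem_antidiagonal.1 hab).2.2]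
  push_cast
  ring

lemma Dz_eq_single_mul_eulerOp (f : LaurentSeries ℂ) :
    Dz f = HahnSeries.single (-1 : ℤ) (1 : ℂ) * eulerOp f := by
  ext n
  rw [← add_neg_cancel_right n 1, HahnSeries.coeff_single_mul_add, one_mul, add_neg_cancel_right]
  rfl

lemma Dz_mul (f g : LaurentSeries ℂ) : Dz (f * g) = Dz f * g + f * Dz g := by
  simp only [Dz_eq_single_mul_eulerOp, eulerOp_mul]
  ring

noncomputable def derivationDz : Derivation ℂ (LaurentSeries ℂ) (LaurentSeries ℂ) :=
  Derivation.mk' Dz fun f g => by rw [Dz_mul, smul_eq_mul, smul_eq_mul]; ring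

lemma sigmaHCB_eq_wittRepr (h : LaurentSeries ℂ) (c : ℂ) (b : LaurentSeries ℂ) (i : ℤ) :
    sigmaHCB h c b i = derivationDz.wittRepr h c b i := by
  have smul_eq (r : ℂ) (y : LaurentSeries ℂ) : r • y = algebraMap ℂ _ r * y := Algebra.smul_def r y
  refine LinearMap.ext fun x => ?_
  change -(1 : ℂ) • (h ^ (i + 1) / Dz h * Dz x) - ((i + 1 : ℤ) * c : ℂ) • (h ^ i * x)
      + h ^ (i + 1) / Dz h * b * x = _
  simp only [Derivation.wittRepr, Derivation.firstOrderOp_apply, derivationDz,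
    Derivation.coe_mk', smul_eq, map_mul, map_neg, map_one, map_intCast]
  push_cast
  ring

theorem commutator_sigmaHCB {h : LaurentSeries ℂ} (hd : Dz h ≠ 0) (c : ℂ) (b : LaurentSeries ℂ)
    (i j : ℤ) :
    sigmaHCB h c b i ∘ₗ sigmaHCB h c b j - sigmaHCB h c b j ∘ₗ sigmaHCB h c b i
      = (i - j) • sigmaHCB h c b (i + j) := by
  simp only [sigmaHCB_eq_wittRepr]
  exact derivationDz.wittRepr_commutator hd c b i j

end LaurentSeries

/-- For any data `(h, c, b)` with `h'` invertible, the operators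
`σ(L_i) = -(h^{i+1}/h') ∂_z - (i+1) c h^i + (h^{i+1}/h') b` define a Lie algebra
homomorphism `W_> → Diff¹(ℂ((z)))`: `[σ(L_i), σ(L_j)] = (i-j) σ(L_{i+j})`. -/
theorem sigmaHCB_is_hom (h : LaurentSeries ℂ) (c : ℂ) (b : LaurentSeries ℂ)
    (hd : Dz h ≠ 0) :
    ∀ i j : ℤ, -1 ≤ i → -1 ≤ j →
      sigmaHCB h c b i ∘ₗ sigmaHCB h c b j - sigmaHCB h c b j ∘ₗ sigmaHCB h c b i
        = ((i - j : ℤ) : ℂ) • sigmaHCB h c b (i + j) := by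
  intro i j _ _
  exact (LaurentSeries.commutator_sigmaHCB hd c b i j).trans
    (Int.cast_smul_eq_zsmul ℂ (i - j) (sigmaHCB h c b (i + j))).symm
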